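/- arXiv:2309.14005 — 8 statements merged into one kernel-verified Lean document; each statement's English description precedes it below -/
import Mathlib

section
/- Iterating the generalized Laplace transform yields a generalized Stieltjes transform: L_{α,μ}{ L_{δ,μ}{f(t); x}; y } = (1/μ) Γ(α/μ) · S_{δ,μ,α/μ}{f(t); y}, i.e., ∫₀^∞ x^{α-1} e^{-y^μ x^μ} (∫₀^∞ t^{δ-1} e^{-x^μ t^μ} f(t) dt) dx = (Γ(α/μ)/μ) ∫₀^∞ t^{δ-1} (y^μ + t^μ)^{-α/μ} f(t) dt. -/
open MeasureTheory Set

theorem iterated_gen_laplace_eq_gen_stieltjes (α δ μ y : ℝ) (f : ℝ → ℝ)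
    (hμ : 0 < μ) (hα : μ < α) (hδ : μ < δ) (hy : 0 < y) (hf : Measurable f)
    (hint : IntegrableOn
      (fun p : ℝ × ℝ =>
        p.1 ^ (α - 1) * Real.exp (-(y ^ μ * p.1 ^ μ)) *
          (p.2 ^ (δ - 1) * Real.exp (-(p.1 ^ μ * p.2 ^ μ)) * f p.2))
      (Ioi 0 ×ˢ Ioi 0)) :
    ∫ x in Ioi (0:ℝ), x ^ (α - 1) * Real.exp (-(y ^ μ * x ^ μ)) *
        ∫ t in Ioi (0:ℝ), t ^ (δ - 1) * Real.exp (-(x ^ μ * t ^ μ)) * f t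
      = (Real.Gamma (α / μ) / μ) *
        ∫ t in Ioi (0:ℝ), t ^ (δ - 1) * (y ^ μ + t ^ μ) ^ (-(α / μ)) * f t := by
  have hint' : Integrable
      (Function.uncurry fun x t : ℝ =>
        x ^ (α - 1) * Real.exp (-(y ^ μ * x ^ μ)) *
          (t ^ (δ - 1) * Real.exp (-(x ^ μ * t ^ μ)) * f t))
      ((volume.restrict (Ioi (0:ℝ))).prod (volume.restrict (Ioi (0:ℝ)))) := by
    rw [Measure.prod_restrict]
    exact hint
  calc
    ∫ x in Ioi (0:ℝ), x ^ (α - 1) * Real.exp (-(y ^ μ * x ^ μ)) *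
        ∫ t in Ioi (0:ℝ), t ^ (δ - 1) * Real.exp (-(x ^ μ * t ^ μ)) * f t
      = ∫ x in Ioi (0:ℝ), ∫ t in Ioi (0:ℝ),
          x ^ (α - 1) * Real.exp (-(y ^ μ * x ^ μ)) *
            (t ^ (δ - 1) * Real.exp (-(x ^ μ * t ^ μ)) * f t) := by
        refine setIntegral_congr_fun measurableSet_Ioi (fun x _ => ?_)
        rw [integral_const_mul]
    _ = ∫ t in Ioi (0:ℝ), ∫ x in Ioi (0:ℝ),
          x ^ (α - 1) * Real.exp (-(y ^ μ * x ^ μ)) *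
            (t ^ (δ - 1) * Real.exp (-(x ^ μ * t ^ μ)) * f t) :=
        integral_integral_swap hint'
    _ = ∫ t in Ioi (0:ℝ), (Real.Gamma (α / μ) / μ) *
          (t ^ (δ - 1) * (y ^ μ + t ^ μ) ^ (-(α / μ)) * f t) := by
        refine setIntegral_congr_fun measurableSet_Ioi (fun t ht => ?_)
        have hbt : (0:ℝ) < y ^ μ + t ^ μ :=
          add_pos (Real.rpow_pos_of_pos hy μ) (Real.rpow_pos_of_pos ht μ)
        have h1 : ∀ x ∈ Ioi (0:ℝ),
            x ^ (α - 1) * Real.exp (-(y ^ μ * x ^ μ)) *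
              (t ^ (δ - 1) * Real.exp (-(x ^ μ * t ^ μ)) * f t)
            = x ^ (α - 1) * Real.exp (-(y ^ μ + t ^ μ) * x ^ μ) *
              (t ^ (δ - 1) * f t) := by
          intro x _
          have h2 : Real.exp (-(y ^ μ + t ^ μ) * x ^ μ)
              = Real.exp (-(y ^ μ * x ^ μ)) * Real.exp (-(x ^ μ * t ^ μ)) := by
            rw [← Real.exp_add]
            ring_nf
          rw [h2]
          ring
        rw [setIntegral_congr_fun measurableSet_Ioi h1, integral_mul_const,
          integral_rpow_mul_exp_neg_mul_rpow hμ (by linarith) hbt]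
        have : -(α - 1 + 1) / μ = -(α / μ) := by ring_nf
        rw [this]
        ring
    _ = (Real.Gamma (α / μ) / μ) *
        ∫ t in Ioi (0:ℝ), t ^ (δ - 1) * (y ^ μ + t ^ μ) ^ (-(α / μ)) * f t :=
        integral_const_mul _ _
end

section
/- Parseval–Goldstein identity: ∫₀^∞ y^{λ-1} L_{α,μ}{f(t); y} L_{δ,μ}{g(x); y} dy = (1/μ) Γ(λ/μ) ∫₀^∞ t^{α-1} f(t) S_{δ,μ,λ/μ}{g(x); t} dt, where L_{α,μ}{f(t); y} = ∫₀^∞ t^{α-1} e^{-y^μ t^μ} f(t) dt and S_{δ,μ,ρ}{g(x); t} = ∫₀^∞ x^{δ-1}(t^μ + x^μ)^{-ρ} g(x) dx. -/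
open MeasureTheory Set

theorem parseval_goldstein (α δ lam μ : ℝ) (f g : ℝ → ℝ)
    (hμ : 0 < μ) (hα : μ < α) (hδ : μ < δ) (hlam : 0 < lam / μ)
    (hf : Measurable f) (hg : Measurable g)
    (hint : IntegrableOn
      (fun p : ℝ × ℝ × ℝ =>
        p.1 ^ (lam - 1) *
          (p.2.1 ^ (α - 1) * Real.exp (-(p.1 ^ μ * p.2.1 ^ μ)) * f p.2.1) *
          (p.2.2 ^ (δ - 1) * Real.exp (-(p.1 ^ μ * p.2.2 ^ μ)) * g p.2.2))
      (Ioi 0 ×ˢ Ioi 0 ×ˢ Ioi 0)) :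
    ∫ y in Ioi (0:ℝ), y ^ (lam - 1) *
        (∫ t in Ioi (0:ℝ), t ^ (α - 1) * Real.exp (-(y ^ μ * t ^ μ)) * f t) *
        (∫ x in Ioi (0:ℝ), x ^ (δ - 1) * Real.exp (-(y ^ μ * x ^ μ)) * g x)
      = (1 / μ) * Real.Gamma (lam / μ) *
        ∫ t in Ioi (0:ℝ), t ^ (α - 1) * f t *
          ∫ x in Ioi (0:ℝ), x ^ (δ - 1) * (t ^ μ + x ^ μ) ^ (-(lam / μ)) * g x := by
  set ν : Measure ℝ := volume.restrict (Ioi 0) with hν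
  set F : ℝ × ℝ × ℝ → ℝ := fun p =>
    p.1 ^ (lam - 1) *
      (p.2.1 ^ (α - 1) * Real.exp (-(p.1 ^ μ * p.2.1 ^ μ)) * f p.2.1) *
      (p.2.2 ^ (δ - 1) * Real.exp (-(p.1 ^ μ * p.2.2 ^ μ)) * g p.2.2) with hFdef
  have hlam0 : 0 < lam := by
    have := mul_pos hlam hμ
    rwa [div_mul_cancel₀ _ hμ.ne'] at this
  -- integrability of F with respect to the triple product of restricted measures
  have hF : Integrable F (ν.prod (ν.prod ν)) := by
    rw [hν, Measure.prod_restrict, Measure.prod_restrict]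
    have hv : (volume : Measure (ℝ × ℝ × ℝ)) =
        (volume : Measure ℝ).prod ((volume : Measure ℝ).prod volume) := by
      rw [← Measure.volume_eq_prod, ← Measure.volume_eq_prod]
    rw [← hv]
    exact hint
  -- Step 1: rewrite LHS as iterated triple integral
  have step1 : (∫ y, y ^ (lam - 1) *
        (∫ t, t ^ (α - 1) * Real.exp (-(y ^ μ * t ^ μ)) * f t ∂ν) *
        (∫ x, x ^ (δ - 1) * Real.exp (-(y ^ μ * x ^ μ)) * g x ∂ν) ∂ν)
      = ∫ y, (∫ t, (∫ x, F (y, t, x) ∂ν) ∂ν) ∂ν := by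
    refine integral_congr_ae (Filter.Eventually.of_forall fun y => ?_)
    simp only [hFdef]
    simp only [MeasureTheory.integral_const_mul, MeasureTheory.integral_mul_const]
  -- Step 2: Fubini, put the y-integral innermost
  have step2 : (∫ y, (∫ t, (∫ x, F (y, t, x) ∂ν) ∂ν) ∂ν)
      = ∫ t, (∫ x, (∫ y, F (y, t, x) ∂ν) ∂ν) ∂ν := by
    have h1 : (∫ y, (∫ t, (∫ x, F (y, t, x) ∂ν) ∂ν) ∂ν)
        = ∫ y, (∫ q, F (y, q) ∂(ν.prod ν)) ∂ν := by
      refine integral_congr_ae ?_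
      filter_upwards [hF.prod_right_ae] with y hy
      exact (integral_prod _ hy).symm
    have h2 : (∫ y, (∫ q, F (y, q) ∂(ν.prod ν)) ∂ν)
        = ∫ p, F p ∂(ν.prod (ν.prod ν)) := (integral_prod _ hF).symm
    have h3 : (∫ p, F p ∂(ν.prod (ν.prod ν)))
        = ∫ q, (∫ y, F (y, q) ∂ν) ∂(ν.prod ν) := integral_prod_symm _ hF
    have hG : Integrable (fun q : ℝ × ℝ => ∫ y, F (y, q) ∂ν) (ν.prod ν) :=
      hF.integral_prod_right
    have h4 : (∫ q, (∫ y, F (y, q) ∂ν) ∂(ν.prod ν))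
        = ∫ t, (∫ x, (∫ y, F (y, t, x) ∂ν) ∂ν) ∂ν := integral_prod _ hG
    rw [h1, h2, h3, h4]
  -- Step 3: compute the inner y-integral via the Gamma function
  have key : ∀ t ∈ Ioi (0:ℝ), ∀ x ∈ Ioi (0:ℝ),
      (∫ y, F (y, t, x) ∂ν) = (1 / μ) * Real.Gamma (lam / μ) *
        (t ^ (α - 1) * f t * (x ^ (δ - 1) * (t ^ μ + x ^ μ) ^ (-(lam / μ)) * g x)) := by
    intro t ht x hx
    rw [mem_Ioi] at ht hx
    have hb : 0 < t ^ μ + x ^ μ := by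
      have := Real.rpow_pos_of_pos ht μ
      have := Real.rpow_pos_of_pos hx μ
      linarith
    have hcongr : (∫ y, F (y, t, x) ∂ν)
        = ∫ y, (t ^ (α - 1) * f t * (x ^ (δ - 1) * g x)) *
            (y ^ (lam - 1) * Real.exp (-(t ^ μ + x ^ μ) * y ^ μ)) ∂ν := by
      refine setIntegral_congr_fun measurableSet_Ioi fun y hy => ?_
      simp only [hFdef]
      rw [show -(t ^ μ + x ^ μ) * y ^ μ = -(y ^ μ * t ^ μ) + -(y ^ μ * x ^ μ) by ring,
        Real.exp_add]
      ring
    rw [hcongr, MeasureTheory.integral_const_mul,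
      integral_rpow_mul_exp_neg_mul_rpow hμ (by linarith) hb]
    rw [show lam - 1 + 1 = lam by ring, show -lam / μ = -(lam / μ) by ring]
    ring
  -- Combine
  rw [step1, step2]
  rw [show (1 / μ) * Real.Gamma (lam / μ) *
        ∫ t, t ^ (α - 1) * f t *
          (∫ x, x ^ (δ - 1) * (t ^ μ + x ^ μ) ^ (-(lam / μ)) * g x ∂ν) ∂ν
      = ∫ t, (∫ x, (1 / μ) * Real.Gamma (lam / μ) *
          (t ^ (α - 1) * f t * (x ^ (δ - 1) * (t ^ μ + x ^ μ) ^ (-(lam / μ)) * g x)) ∂ν) ∂ν by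
    rw [← MeasureTheory.integral_const_mul]
    refine integral_congr_ae (Filter.Eventually.of_forall fun t => ?_)
    simp only [MeasureTheory.integral_const_mul]]
  refine setIntegral_congr_fun measurableSet_Ioi fun t ht => ?_
  refine setIntegral_congr_fun measurableSet_Ioi fun x hx => ?_
  exact key t ht x hx
end

section
/- For real ν > 0, a > 0, y > 0, the Laplace transform ∫₀^∞ t^{ν-1} e^{-yt} cos(at) dt = Γ(ν) (a² + y²)^{-ν/2} cos(ν arctan(a/y)). -/
/-!
Put `z = y - a i`. The integral is the real part of `∫₀^∞ t^(ν-1) e^(-z t) dt`, which is the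
complex moment generating function of the measure `t^(ν-1) dt` on `(0, ∞)` evaluated at `-z`.
As a function of `z` it is holomorphic on the half-plane `Re z > 0`, as is `Γ(ν) z^(-ν)`, and the
two agree for real `z > 0` by the Gamma integral, hence on the whole half-plane. Taking real parts
with `|z| = √(a² + y²)` and `arg z = -arctan (a / y)` gives the formula.
-/

open MeasureTheory Set Filter ProbabilityTheory
open scoped Topology

lemma Complex.arg_eq_arctan_of_re_pos {z : ℂ} (hz : 0 < z.re) :
    z.arg = Real.arctan (z.im / z.re) := by
  obtain ⟨h_lower, h_upper⟩ := abs_lt.1 (Complex.abs_arg_lt_pi_div_two_iff.2 (Or.inl hz))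
  rw [← Complex.tan_arg, Real.arctan_tan h_lower h_upper]

lemma AnalyticOnNhd.eqOn_of_preconnected_of_eventuallyEq_ofReal {E : Type*}
    [NormedAddCommGroup E] [NormedSpace ℂ E] [CompleteSpace E] {f g : ℂ → E} {U : Set ℂ}
    (hf : AnalyticOnNhd ℂ f U) (hg : AnalyticOnNhd ℂ g U) (hU : IsPreconnected U) {x : ℝ}
    (hx : (x : ℂ) ∈ U) (hfg : ∀ᶠ r : ℝ in 𝓝 x, f r = g r) : EqOn f g U := by
  refine hf.eqOn_of_preconnected_of_frequently_eq hg hU hx ?_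
  have h_ofReal : Tendsto ((↑) : ℝ → ℂ) (𝓝[≠] x) (𝓝[≠] (x : ℂ)) :=
    Complex.continuous_ofReal.continuousWithinAt.tendsto_nhdsWithin fun _ _ => by simp_all
  exact h_ofReal.frequently (hfg.filter_mono nhdsWithin_le_nhds).frequently

lemma ProbabilityTheory.re_complexMGF {Ω : Type*} {m : MeasurableSpace Ω} {X : Ω → ℝ}
    {μ : Measure Ω} (hX : AEMeasurable X μ) {z : ℂ} (hz : z.re ∈ integrableExpSet X μ) :
    (complexMGF X μ z).re = ∫ ω, Real.exp (z.re * X ω) * Real.cos (z.im * X ω) ∂μ := by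
  rw [complexMGF, ← RCLike.re_eq_complex_re,
    ← integral_re (integrable_cexp_mul_of_re_mem_integrableExpSet hX hz)]
  simp [Complex.exp_re]

noncomputable def powerMeasure (ν : ℝ) : Measure ℝ :=
  (volume.restrict (Ioi 0)).withDensity fun t => ENNReal.ofReal (t ^ (ν - 1))

section powerMeasure

variable {E : Type*} [NormedAddCommGroup E] [NormedSpace ℝ E]

lemma integral_powerMeasure (ν : ℝ) (g : ℝ → E) :
    ∫ t, g t ∂powerMeasure ν = ∫ t in Ioi 0, t ^ (ν - 1) • g t := by
  rw [powerMeasure, integral_withDensity_eq_integral_toReal_smul (by fun_prop)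
    (.of_forall fun _ => ENNReal.ofReal_lt_top)]
  refine setIntegral_congr_fun measurableSet_Ioi fun t (ht : 0 < t) => ?_
  rw [ENNReal.toReal_ofReal (Real.rpow_nonneg ht.le _)]

lemma integrable_powerMeasure_iff (ν : ℝ) {g : ℝ → E} :
    Integrable g (powerMeasure ν) ↔ IntegrableOn (fun t => t ^ (ν - 1) • g t) (Ioi 0) := by
  rw [powerMeasure, integrable_withDensity_iff_integrable_smul' (by fun_prop)
    (.of_forall fun _ => ENNReal.ofReal_lt_top)]
  refine integrableOn_congr_fun (fun t (ht : 0 < t) => ?_) measurableSet_Ioi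
  rw [ENNReal.toReal_ofReal (Real.rpow_nonneg ht.le _)]

end powerMeasure

lemma Iio_subset_integrableExpSet_powerMeasure {ν : ℝ} (hν : 0 < ν) :
    Iio 0 ⊆ integrableExpSet id (powerMeasure ν) := by
  intro u (hu : u < 0)
  change Integrable (fun t => Real.exp (u * t)) (powerMeasure ν)
  rw [integrable_powerMeasure_iff]
  simpa [neg_mul] using
    integrableOn_rpow_mul_exp_neg_mul_rpow (by linarith : -1 < ν - 1) one_pos (neg_pos.2 hu)

lemma mgf_powerMeasure_neg {ν r : ℝ} (hν : 0 < ν) (hr : 0 < r) :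
    mgf id (powerMeasure ν) (-r) = Real.Gamma ν * r ^ (-ν) := by
  rw [mgf, integral_powerMeasure]
  simp only [id, smul_eq_mul, neg_mul]
  rw [Real.integral_rpow_mul_exp_neg_mul_Ioi hν hr, one_div, Real.inv_rpow hr.le,
    Real.rpow_neg hr.le, mul_comm]

lemma complexMGF_powerMeasure_neg {ν : ℝ} (hν : 0 < ν) {z : ℂ} (hz : 0 < z.re) :
    complexMGF id (powerMeasure ν) (-z) = Real.Gamma ν * z ^ (-(ν : ℂ)) := by
  have h_strip : {z : ℂ | 0 < z.re} ⊆
      Neg.neg ⁻¹' {w | w.re ∈ interior (integrableExpSet id (powerMeasure ν))} :=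
    fun z (hz : 0 < z.re) => interior_maximal (Iio_subset_integrableExpSet_powerMeasure hν)
      isOpen_Iio (by simpa using hz)
  have h_lhs : AnalyticOnNhd ℂ (fun z => complexMGF id (powerMeasure ν) (-z)) {z | 0 < z.re} :=
    analyticOnNhd_complexMGF.comp analyticOnNhd_id.neg h_strip
  have h_rhs :
      AnalyticOnNhd ℂ (fun z : ℂ => (Real.Gamma ν : ℂ) * z ^ (-(ν : ℂ))) {z | 0 < z.re} :=
    fun z (hz : 0 < z.re) => analyticAt_const.mul
      (analyticAt_id.cpow analyticAt_const (Or.inl hz))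
  refine h_lhs.eqOn_of_preconnected_of_eventuallyEq_ofReal h_rhs
    (convex_halfSpace_re_gt 0).isPreconnected (x := 1) (by simp) ?_ hz
  filter_upwards [lt_mem_nhds one_pos] with r hr
  rw [← Complex.ofReal_neg, complexMGF_ofReal, mgf_powerMeasure_neg hν hr, Complex.ofReal_mul,
    ← Complex.ofReal_neg, Complex.ofReal_cpow hr.le]

theorem laplace_power_cos_general (ν a y : ℝ) (hν : 0 < ν) (hy : 0 < y) :
    ∫ t in Ioi (0:ℝ), t ^ (ν - 1) * Real.exp (-(y * t)) * Real.cos (a * t)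
      = Real.Gamma ν * (a ^ 2 + y ^ 2) ^ (-(ν / 2)) * Real.cos (ν * Real.arctan (a / y)) := by
  set z : ℂ := ⟨y, -a⟩
  have hz : 0 < z.re := hy
  have h_norm : ‖z‖ = √(a ^ 2 + y ^ 2) := by
    rw [Complex.norm_def, Complex.normSq_apply]
    show √(y * y + -a * -a) = _
    ring_nf
  have h_arg : z.arg = -Real.arctan (a / y) := by
    rw [Complex.arg_eq_arctan_of_re_pos hz, neg_div, Real.arctan_neg]
  have h_laplace : ∫ t in Ioi (0:ℝ), t ^ (ν - 1) * Real.exp (-(y * t)) * Real.cos (a * t)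
      = (complexMGF id (powerMeasure ν) (-z)).re := by
    rw [re_complexMGF (z := -z) aemeasurable_id
      (Iio_subset_integrableExpSet_powerMeasure hν (neg_lt_zero.2 hz)), integral_powerMeasure]
    simp [z, mul_assoc]
  rw [h_laplace, complexMGF_powerMeasure_neg hν hz, ← Complex.ofReal_neg, Complex.re_ofReal_mul,
    Complex.cpow_ofReal_re, h_norm, h_arg, Real.sqrt_eq_rpow, ← Real.rpow_mul (by positivity)]
  ring_nf

theorem laplace_power_cos (ν a y : ℝ) (hν : 0 < ν) (ha : 0 < a) (hy : 0 < y) :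
    ∫ t in Ioi (0:ℝ), t ^ (ν - 1) * Real.exp (-(y * t)) * Real.cos (a * t)
      = Real.Gamma ν * (a ^ 2 + y ^ 2) ^ (-(ν / 2)) * Real.cos (ν * Real.arctan (a / y)) :=
  laplace_power_cos_general ν a y hν hy
end

section
/- Composition of generalized Laplace and generalized Fourier cosine transforms: L_{α,μ}{ F_{c,δ,μ}{f(t); x}; y } = (1/μ) Γ(α/μ) ∫₀^∞ t^{δ-1} (y^{2μ} + t^{2μ})^{-α/(2μ)} cos[(α/μ) arctan(t^μ/y^μ)] f(t) dt. -/
/-!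
By Fubini the iterated integral becomes `∫ t^(δ-1) f(t) K(t) dt` with the kernel
`K(t) = ∫ x^(α-1) exp(-y^μ x^μ) cos(t^μ x^μ) dx`. The substitution `u = x^μ` turns `K(t)`
into `(1/μ) ∫ u^(s-1) e^{-au} cos(bu) du` with `s = α/μ`, `a = y^μ`, `b = t^μ`, the real part
of the Gamma integral `∫ u^(s-1) e^{-zu} du = Γ(s) z^(-s)` at the complex rate `z = a - ib`.
That identity holds for real rates, and both sides are holomorphic in `z` on the right
half-plane, so it extends there by the identity theorem. Finally
`Re (a - ib)^(-s) = (a² + b²)^(-s/2) cos(s arctan(b/a))` by the polar form of `a - ib`.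
-/

open MeasureTheory Set Filter Topology

lemma integrableOn_rpow_mul_exp_neg_mul {r b : ℝ} (hr : -1 < r) (hb : 0 < b) :
    IntegrableOn (fun x : ℝ => x ^ r * Real.exp (-(b * x))) (Ioi 0) := by
  simpa using integrableOn_rpow_mul_exp_neg_mul_rpow hr zero_lt_one hb

namespace Complex

lemma norm_ofReal_cpow_mul_exp_neg_mul {u : ℝ} (hu : 0 < u) (s z : ℂ) :
    ‖(u : ℂ) ^ s * cexp (-(z * u))‖ = u ^ s.re * Real.exp (-(z.re * u)) := by
  simp [norm_exp, norm_cpow_eq_rpow_re_of_pos hu]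

lemma integrableOn_cpow_mul_exp_neg_mul {s z : ℂ} (hs : 0 < s.re) (hz : 0 < z.re) :
    IntegrableOn (fun u : ℝ => (u : ℂ) ^ (s - 1) * cexp (-(z * u))) (Ioi 0) := by
  refine (integrableOn_rpow_mul_exp_neg_mul (r := s.re - 1) (by linarith) hz).mono'
    (by fun_prop) ?_
  filter_upwards [ae_restrict_mem measurableSet_Ioi] with u (hu : 0 < u)
  rw [norm_ofReal_cpow_mul_exp_neg_mul hu, sub_re, one_re]

lemma differentiableOn_integral_cpow_mul_exp_neg_mul {s : ℂ} (hs : 0 < s.re) :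
    DifferentiableOn ℂ (fun z : ℂ => ∫ u in Ioi (0:ℝ), (u : ℂ) ^ (s - 1) * cexp (-(z * u)))
      {z | 0 < z.re} := by
  intro z₀ (hz₀ : 0 < z₀.re)
  have hε : 0 < z₀.re / 2 := half_pos hz₀
  have hre : ∀ w ∈ Metric.ball z₀ (z₀.re / 2), z₀.re / 2 ≤ w.re := fun w hw => by
    have := (re_le_norm (z₀ - w)).trans_lt (by rwa [← dist_eq, dist_comm])
    rw [sub_re] at this
    linarith
  refine (hasDerivAt_integral_of_dominated_loc_of_deriv_le (Metric.ball_mem_nhds z₀ hε)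
    (bound := fun u => u ^ s.re * Real.exp (-(z₀.re / 2 * u)))
    (μ := volume.restrict (Ioi 0)) (F := fun w u => (u : ℂ) ^ (s - 1) * cexp (-(w * u)))
    (F' := fun w u => -((u : ℂ) ^ (s - 1) * (cexp (-(w * u)) * u)))
    (Eventually.of_forall fun w => by fun_prop) (integrableOn_cpow_mul_exp_neg_mul hs hz₀)
    (by fun_prop) ?_ (integrableOn_rpow_mul_exp_neg_mul (by linarith) hε) ?_
    ).2.differentiableAt.differentiableWithinAt
  · filter_upwards [ae_restrict_mem measurableSet_Ioi] with u (hu : 0 < u) w hw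
    rw [norm_neg, ← mul_assoc, norm_mul, norm_ofReal_cpow_mul_exp_neg_mul hu, norm_real,
      Real.norm_of_nonneg hu.le, mul_right_comm, sub_re, one_re, ← Real.rpow_add_one hu.ne',
      sub_add_cancel]
    have := hre w hw
    gcongr
  · filter_upwards with u w _
    simpa using (((hasDerivAt_id w).mul_const (u : ℂ)).neg.cexp).const_mul ((u : ℂ) ^ (s - 1))

theorem integral_cpow_mul_exp_neg_complex_mul_Ioi {s z : ℂ} (hs : 0 < s.re) (hz : 0 < z.re) :
    ∫ u in Ioi (0:ℝ), (u : ℂ) ^ (s - 1) * cexp (-(z * u)) = Gamma s * z ^ (-s) := by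
  have hU : IsOpen {w : ℂ | 0 < w.re} := isOpen_lt continuous_const continuous_re
  have hg : DifferentiableOn ℂ (fun w : ℂ => Gamma s * w ^ (-s)) {w | 0 < w.re} := fun w hw =>
    ((differentiableAt_id.cpow_const (Or.inl hw)).const_mul _).differentiableWithinAt
  have hreal : ∀ᶠ x : ℝ in 𝓝[>] 1,
      ∫ u in Ioi (0:ℝ), (u : ℂ) ^ (s - 1) * cexp (-(x * u)) = Gamma s * (x : ℂ) ^ (-s) :=
    eventually_nhdsWithin_of_forall fun x (hx : 1 < x) => by
      have hx₀ : 0 < x := zero_lt_one.trans hx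
      rw [integral_cpow_mul_exp_neg_mul_Ioi hs hx₀, mul_comm, one_div,
        inv_cpow _ _ (by rw [arg_ofReal_of_nonneg hx₀.le]; exact Real.pi_ne_zero.symm), cpow_neg]
  have hofReal : Tendsto ((↑) : ℝ → ℂ) (𝓝[>] 1) (𝓝[≠] 1) :=
    tendsto_nhdsWithin_iff.2 ⟨(continuous_ofReal.tendsto' 1 1 ofReal_one).mono_left
      nhdsWithin_le_nhds,
      eventually_nhdsWithin_of_forall fun x (hx : 1 < x) => by simpa using hx.ne'⟩
  exact ((differentiableOn_integral_cpow_mul_exp_neg_mul hs).analyticOnNhd hU)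
    |>.eqOn_of_preconnected_of_frequently_eq (hg.analyticOnNhd hU)
      (convex_halfSpace_re_gt 0).isPreconnected (by simp) (hofReal.frequently hreal.frequently) hz

lemma arg_eq_arctan_of_re_pos_s10 {z : ℂ} (hz : 0 < z.re) : arg z = Real.arctan (z.im / z.re) := by
  have h := abs_lt.1 (abs_arg_lt_pi_div_two_iff.2 (Or.inl hz))
  rw [← tan_arg, Real.arctan_tan h.1 h.2]

lemma re_ofReal_sub_mul_I_cpow_neg {a : ℝ} (ha : 0 < a) (b s : ℝ) :
    ((a - b * I : ℂ) ^ (-(s : ℂ))).re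
      = (a ^ 2 + b ^ 2) ^ (-(s / 2)) * Real.cos (s * Real.arctan (b / a)) := by
  have hre : (a - b * I : ℂ).re = a := by simp
  have him : (a - b * I : ℂ).im = -b := by simp
  have hnorm : ‖(a - b * I : ℂ)‖ = (a ^ 2 + b ^ 2) ^ (1 / 2 : ℝ) := by
    rw [norm_def, normSq_apply, hre, him, Real.sqrt_eq_rpow]
    ring_nf
  rw [← ofReal_neg, cpow_ofReal_re, arg_eq_arctan_of_re_pos_s10 (by rw [hre]; exact ha), hre, him,
    hnorm, ← Real.rpow_mul (by positivity), neg_div, Real.arctan_neg, neg_mul_neg, mul_comm]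
  ring_nf

end Complex

namespace Real

theorem integral_rpow_mul_exp_neg_mul_mul_cos {s a : ℝ} (hs : 0 < s) (ha : 0 < a) (b : ℝ) :
    ∫ u in Ioi (0:ℝ), u ^ (s - 1) * exp (-(a * u)) * cos (b * u)
      = Gamma s * ((a ^ 2 + b ^ 2) ^ (-(s / 2)) * cos (s * arctan (b / a))) := by
  set z : ℂ := a - b * Complex.I with hz_def
  have hz : 0 < z.re := by simpa [hz_def] using ha
  have hs' : 0 < (s : ℂ).re := by simpa using hs
  have hre : ∀ u ∈ Ioi (0:ℝ), u ^ (s - 1) * exp (-(a * u)) * cos (b * u)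
      = ((u : ℂ) ^ ((s : ℂ) - 1) * Complex.exp (-(z * u))).re := by
    intro u (hu : 0 < u)
    rw [← Complex.ofReal_one, ← Complex.ofReal_sub, ← Complex.ofReal_cpow hu.le,
      Complex.re_ofReal_mul, Complex.exp_re, mul_assoc]
    simp [hz_def, Complex.mul_re, Complex.mul_im]
  calc _ = ∫ u in Ioi (0:ℝ), ((u : ℂ) ^ ((s : ℂ) - 1) * Complex.exp (-(z * u))).re :=
        setIntegral_congr_fun measurableSet_Ioi hre
    _ = (∫ u in Ioi (0:ℝ), (u : ℂ) ^ ((s : ℂ) - 1) * Complex.exp (-(z * u))).re :=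
        integral_re (Complex.integrableOn_cpow_mul_exp_neg_mul hs' hz)
    _ = _ := by
      rw [Complex.integral_cpow_mul_exp_neg_complex_mul_Ioi hs' hz, Complex.Gamma_ofReal,
        Complex.re_ofReal_mul, hz_def, Complex.re_ofReal_sub_mul_I_cpow_neg ha]

theorem integral_rpow_mul_exp_neg_mul_rpow_mul_cos {α μ a : ℝ} (hα : 0 < α) (hμ : 0 < μ)
    (ha : 0 < a) (b : ℝ) :
    ∫ x in Ioi (0:ℝ), x ^ (α - 1) * exp (-(a * x ^ μ)) * cos (b * x ^ μ)
      = 1 / μ * Gamma (α / μ) *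
          ((a ^ 2 + b ^ 2) ^ (-(α / (2 * μ))) * cos (α / μ * arctan (b / a))) := by
  have hsub := integral_comp_rpow_Ioi
    (fun u => u ^ (α / μ - 1) * exp (-(a * u)) * cos (b * u)) hμ.ne'
  rw [integral_rpow_mul_exp_neg_mul_mul_cos (div_pos hα hμ) ha, div_div, mul_comm μ 2] at hsub
  rw [mul_assoc, ← hsub, ← integral_const_mul]
  refine setIntegral_congr_fun measurableSet_Ioi fun x (hx : 0 < x) => ?_
  have hpow : x ^ (μ - 1) * (x ^ μ) ^ (α / μ - 1) = x ^ (α - 1) := by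
    rw [← rpow_mul hx.le, ← rpow_add hx]
    congr 1
    field_simp
    ring
  simp only [smul_eq_mul, abs_of_pos hμ]
  rw [← hpow]
  field_simp

end Real

theorem laplace_fourier_cosine_composition_general (α δ μ y : ℝ) (f : ℝ → ℝ)
    (hμ : 0 < μ) (hα : μ < α) (hy : 0 < y)
    (hint : IntegrableOn
      (fun p : ℝ × ℝ =>
        p.1 ^ (α - 1) * Real.exp (-(y ^ μ * p.1 ^ μ)) *
          (p.2 ^ (δ - 1) * Real.cos (p.1 ^ μ * p.2 ^ μ) * f p.2))
      (Ioi 0 ×ˢ Ioi 0)) :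
    ∫ x in Ioi (0:ℝ), x ^ (α - 1) * Real.exp (-(y ^ μ * x ^ μ)) *
        ∫ t in Ioi (0:ℝ), t ^ (δ - 1) * Real.cos (x ^ μ * t ^ μ) * f t
      = (1 / μ) * Real.Gamma (α / μ) *
        ∫ t in Ioi (0:ℝ), t ^ (δ - 1) * (y ^ (2 * μ) + t ^ (2 * μ)) ^ (-(α / (2 * μ))) *
          Real.cos ((α / μ) * Real.arctan (t ^ μ / y ^ μ)) * f t := by
  have hsq : ∀ {z : ℝ}, 0 < z → (z ^ μ) ^ 2 = z ^ (2 * μ) := fun hz => by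
    rw [← Real.rpow_mul_natCast hz.le, mul_comm]; norm_num
  calc _ = ∫ x in Ioi (0:ℝ), ∫ t in Ioi (0:ℝ), x ^ (α - 1) * Real.exp (-(y ^ μ * x ^ μ)) *
          (t ^ (δ - 1) * Real.cos (x ^ μ * t ^ μ) * f t) := by
        simp only [integral_const_mul]
    _ = ∫ t in Ioi (0:ℝ), ∫ x in Ioi (0:ℝ), x ^ (α - 1) * Real.exp (-(y ^ μ * x ^ μ)) *
          (t ^ (δ - 1) * Real.cos (x ^ μ * t ^ μ) * f t) :=
        integral_integral_swap (by rwa [Measure.prod_restrict, ← Measure.volume_eq_prod])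
    _ = _ := by
      rw [← integral_const_mul]
      refine setIntegral_congr_fun measurableSet_Ioi fun t (ht : 0 < t) => ?_
      have hinner := Real.integral_rpow_mul_exp_neg_mul_rpow_mul_cos (hμ.trans hα) hμ
        (Real.rpow_pos_of_pos hy μ) (t ^ μ)
      rw [hsq hy, hsq ht] at hinner
      calc _ = (∫ x in Ioi (0:ℝ), x ^ (α - 1) * Real.exp (-(y ^ μ * x ^ μ)) *
              Real.cos (t ^ μ * x ^ μ)) * (t ^ (δ - 1) * f t) := by
            rw [← integral_mul_const]
            congr 1 with x
            rw [mul_comm (t ^ μ)]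
            ring
        _ = _ := by rw [hinner]; ring

theorem laplace_fourier_cosine_composition (α δ μ y : ℝ) (f : ℝ → ℝ)
    (hμ : 0 < μ) (hα : μ < α) (hy : 0 < y) (hf : Measurable f)
    (habs : IntegrableOn (fun t => t ^ (δ - 1) * f t) (Ioi 0))
    (hint : IntegrableOn
      (fun p : ℝ × ℝ =>
        p.1 ^ (α - 1) * Real.exp (-(y ^ μ * p.1 ^ μ)) *
          (p.2 ^ (δ - 1) * Real.cos (p.1 ^ μ * p.2 ^ μ) * f p.2))
      (Ioi 0 ×ˢ Ioi 0)) :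
    ∫ x in Ioi (0:ℝ), x ^ (α - 1) * Real.exp (-(y ^ μ * x ^ μ)) *
        ∫ t in Ioi (0:ℝ), t ^ (δ - 1) * Real.cos (x ^ μ * t ^ μ) * f t
      = (1 / μ) * Real.Gamma (α / μ) *
        ∫ t in Ioi (0:ℝ), t ^ (δ - 1) * (y ^ (2 * μ) + t ^ (2 * μ)) ^ (-(α / (2 * μ))) *
          Real.cos ((α / μ) * Real.arctan (t ^ μ / y ^ μ)) * f t :=
  laplace_fourier_cosine_composition_general α δ μ y f hμ hα hy hint
end

section
/- Applying the generalized Laplace transform to a generalized Stieltjes transform gives an integral against the confluent hypergeometric function of the second kind: L_{α,μ}{ S_{δ,μ,ρ}{f(t); x}; y } = (Γ(α/μ)/μ) ∫₀^∞ t^{δ+α-μρ-1} U(α/μ; 1 + α/μ − ρ; t^μ y^μ) f(t) dt, where U(a; c; z) = (1/Γ(a)) ∫₀^∞ e^{-zu} u^{a-1} (1+u)^{c-a-1} du. -/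
open MeasureTheory Set

noncomputable def tricomiU (a c z : ℝ) : ℝ :=
  (1 / Real.Gamma a) * ∫ u in Set.Ioi (0:ℝ), Real.exp (-(z * u)) * u ^ (a - 1) * (1 + u) ^ (c - a - 1)

lemma J_eq (α μ ρ y t : ℝ) (hμ : 0 < μ) (hα : μ < α) (hy : 0 < y) (ht : 0 < t) :
    ∫ x in Ioi (0:ℝ), x ^ (α - 1) * Real.exp (-(y ^ μ * x ^ μ)) * (x ^ μ + t ^ μ) ^ (-ρ)
      = (Real.Gamma (α / μ) / μ) * t ^ (α - μ * ρ) *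
        tricomiU (α / μ) (1 + α / μ - ρ) (t ^ μ * y ^ μ) := by
  have hα0 : (0:ℝ) < α := hμ.trans hα
  have ha : (0:ℝ) < α / μ := div_pos hα0 hμ
  have hΓ : (0:ℝ) < Real.Gamma (α / μ) := Real.Gamma_pos_of_pos ha
  have htμ : (0:ℝ) < t ^ μ := Real.rpow_pos_of_pos ht μ
  set g : ℝ → ℝ := fun s =>
    μ⁻¹ * s ^ (α / μ - 1) * Real.exp (-(y ^ μ * s)) * (s + t ^ μ) ^ (-ρ) with hg
  have step1 : ∫ x in Ioi (0:ℝ), x ^ (α - 1) * Real.exp (-(y ^ μ * x ^ μ)) *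
      (x ^ μ + t ^ μ) ^ (-ρ) = ∫ s in Ioi (0:ℝ), g s := by
    rw [← integral_comp_rpow_Ioi_of_pos (g := g) hμ]
    refine setIntegral_congr_fun measurableSet_Ioi fun x hx => ?_
    have hx' : (0:ℝ) < x := hx
    have h1 : ((x:ℝ) ^ μ) ^ (α / μ - 1) = x ^ (α - μ) := by
      rw [← Real.rpow_mul hx'.le]
      congr 1
      field_simp
    have h2 : (x:ℝ) ^ (μ - 1) * x ^ (α - μ) = x ^ (α - 1) := by
      rw [← Real.rpow_add hx']
      ring_nf
    simp only [hg, smul_eq_mul, h1]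
    rw [← h2]
    field_simp
  have step2 : ∫ s in Ioi (0:ℝ), g s = t ^ μ * ∫ u in Ioi (0:ℝ), g (t ^ μ * u) := by
    rw [integral_comp_mul_left_Ioi g 0 htμ, mul_zero, smul_eq_mul, ← mul_assoc,
      mul_inv_cancel₀ htμ.ne', one_mul]
  have step3 : ∫ u in Ioi (0:ℝ), g (t ^ μ * u)
      = (μ⁻¹ * (t ^ μ) ^ (α / μ - 1) * (t ^ μ) ^ (-ρ)) *
        ∫ u in Ioi (0:ℝ), Real.exp (-(t ^ μ * y ^ μ * u)) * u ^ (α / μ - 1) * (1 + u) ^ (-ρ) := by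
    rw [← integral_const_mul]
    refine setIntegral_congr_fun measurableSet_Ioi fun u hu => ?_
    have hu' : (0:ℝ) < u := hu
    have h1 : (t ^ μ * u) ^ (α / μ - 1) = (t ^ μ) ^ (α / μ - 1) * u ^ (α / μ - 1) :=
      Real.mul_rpow htμ.le hu'.le
    have h2 : t ^ μ * u + t ^ μ = t ^ μ * (1 + u) := by ring
    have h3 : (t ^ μ * (1 + u)) ^ (-ρ) = (t ^ μ) ^ (-ρ) * (1 + u) ^ (-ρ) :=
      Real.mul_rpow htμ.le (by linarith)
    have h4 : y ^ μ * (t ^ μ * u) = t ^ μ * y ^ μ * u := by ring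
    simp only [hg, h1, h2, h3, h4]
    ring
  have hU : tricomiU (α / μ) (1 + α / μ - ρ) (t ^ μ * y ^ μ)
      = (1 / Real.Gamma (α / μ)) *
        ∫ u in Ioi (0:ℝ), Real.exp (-(t ^ μ * y ^ μ * u)) * u ^ (α / μ - 1) * (1 + u) ^ (-ρ) := by
    rw [tricomiU]
    congr 1
    refine setIntegral_congr_fun measurableSet_Ioi fun u _ => ?_
    congr 1
    ring
  rw [step1, step2, step3, hU]
  have e1 : (t ^ μ) ^ (α / μ - 1) = t ^ (α - μ) := by
    rw [← Real.rpow_mul ht.le]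
    congr 1
    field_simp
  have e2 : (t ^ μ) ^ (-ρ) = t ^ (-(μ * ρ)) := by
    rw [← Real.rpow_mul ht.le]
    ring_nf
  have e3 : t ^ μ * (t ^ (α - μ) * t ^ (-(μ * ρ))) = t ^ (α - μ * ρ) := by
    rw [← Real.rpow_add ht, ← Real.rpow_add ht]
    ring_nf
  rw [e1, e2]
  field_simp
  rw [← e3]
  ring

theorem laplace_of_gen_stieltjes (α δ μ ρ y : ℝ) (f : ℝ → ℝ)
    (hμ : 0 < μ) (hα : μ < α) (hδ : 0 < δ) (hy : 0 < y)
    (hρ : 0 < ρ) (hρ' : ρ < 1 + α / μ) (hf : Measurable f)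
    (hint : IntegrableOn
      (fun p : ℝ × ℝ =>
        p.1 ^ (α - 1) * Real.exp (-(y ^ μ * p.1 ^ μ)) *
          (p.2 ^ (δ - 1) * (p.1 ^ μ + p.2 ^ μ) ^ (-ρ) * f p.2))
      (Ioi 0 ×ˢ Ioi 0)) :
    ∫ x in Ioi (0:ℝ), x ^ (α - 1) * Real.exp (-(y ^ μ * x ^ μ)) *
        ∫ t in Ioi (0:ℝ), t ^ (δ - 1) * (x ^ μ + t ^ μ) ^ (-ρ) * f t
      = (Real.Gamma (α / μ) / μ) *
        ∫ t in Ioi (0:ℝ), t ^ (δ + α - μ * ρ - 1) *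
          tricomiU (α / μ) (1 + α / μ - ρ) (t ^ μ * y ^ μ) * f t := by
  have hprod : Integrable
      (Function.uncurry fun x t : ℝ =>
        x ^ (α - 1) * Real.exp (-(y ^ μ * x ^ μ)) *
          (t ^ (δ - 1) * (x ^ μ + t ^ μ) ^ (-ρ) * f t))
      ((volume.restrict (Ioi 0)).prod (volume.restrict (Ioi 0))) := by
    rw [Measure.prod_restrict, ← Measure.volume_eq_prod]
    exact hint
  calc
    ∫ x in Ioi (0:ℝ), x ^ (α - 1) * Real.exp (-(y ^ μ * x ^ μ)) *
        ∫ t in Ioi (0:ℝ), t ^ (δ - 1) * (x ^ μ + t ^ μ) ^ (-ρ) * f t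
      = ∫ x in Ioi (0:ℝ), ∫ t in Ioi (0:ℝ), x ^ (α - 1) * Real.exp (-(y ^ μ * x ^ μ)) *
          (t ^ (δ - 1) * (x ^ μ + t ^ μ) ^ (-ρ) * f t) := by
        simp_rw [← integral_const_mul]
    _ = ∫ t in Ioi (0:ℝ), ∫ x in Ioi (0:ℝ), x ^ (α - 1) * Real.exp (-(y ^ μ * x ^ μ)) *
          (t ^ (δ - 1) * (x ^ μ + t ^ μ) ^ (-ρ) * f t) := integral_integral_swap hprod
    _ = ∫ t in Ioi (0:ℝ), (Real.Gamma (α / μ) / μ) * (t ^ (δ + α - μ * ρ - 1) *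
          tricomiU (α / μ) (1 + α / μ - ρ) (t ^ μ * y ^ μ) * f t) := by
        refine setIntegral_congr_fun measurableSet_Ioi fun t ht => ?_
        have ht' : (0:ℝ) < t := ht
        calc
          ∫ x in Ioi (0:ℝ), x ^ (α - 1) * Real.exp (-(y ^ μ * x ^ μ)) *
              (t ^ (δ - 1) * (x ^ μ + t ^ μ) ^ (-ρ) * f t)
            = ∫ x in Ioi (0:ℝ), (t ^ (δ - 1) * f t) *
                (x ^ (α - 1) * Real.exp (-(y ^ μ * x ^ μ)) * (x ^ μ + t ^ μ) ^ (-ρ)) := by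
              refine setIntegral_congr_fun measurableSet_Ioi fun x _ => ?_
              ring
          _ = (t ^ (δ - 1) * f t) *
              ∫ x in Ioi (0:ℝ), x ^ (α - 1) * Real.exp (-(y ^ μ * x ^ μ)) *
                (x ^ μ + t ^ μ) ^ (-ρ) := integral_const_mul _ _
          _ = (t ^ (δ - 1) * f t) * ((Real.Gamma (α / μ) / μ) * t ^ (α - μ * ρ) *
                tricomiU (α / μ) (1 + α / μ - ρ) (t ^ μ * y ^ μ)) := by
              rw [J_eq α μ ρ y t hμ hα hy ht']
          _ = (Real.Gamma (α / μ) / μ) * (t ^ (δ + α - μ * ρ - 1) *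
                tricomiU (α / μ) (1 + α / μ - ρ) (t ^ μ * y ^ μ) * f t) := by
              have h : t ^ (δ - 1) * t ^ (α - μ * ρ) = t ^ (δ + α - μ * ρ - 1) := by
                rw [← Real.rpow_add ht']
                ring_nf
              rw [← h]
              ring
    _ = (Real.Gamma (α / μ) / μ) *
        ∫ t in Ioi (0:ℝ), t ^ (δ + α - μ * ρ - 1) *
          tricomiU (α / μ) (1 + α / μ - ρ) (t ^ μ * y ^ μ) * f t := integral_const_mul _ _
end

section
/- Applying the generalized Stieltjes transform to a generalized Laplace transform gives: S_{δ,μ,ρ}{ L_{α,μ}{f(t); x}; y } = (y^{δ-μρ}/μ) Γ(δ/μ) ∫₀^∞ t^{α-1} U(δ/μ; 1 + δ/μ − ρ; t^μ y^μ) f(t) dt, where U(a;c;z) = (1/Γ(a)) ∫₀^∞ e^{-zu} u^{a-1}(1+u)^{c-a-1} du. -/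
open MeasureTheory Set

lemma key_sub (δ μ ρ y c : ℝ) (hμ : 0 < μ) (hy : 0 < y) :
    ∫ x in Ioi (0:ℝ), x ^ (δ - 1) * (y ^ μ + x ^ μ) ^ (-ρ) * Real.exp (-(x ^ μ * c))
      = (y ^ (δ - μ * ρ) / μ) *
        ∫ u in Ioi (0:ℝ), Real.exp (-(c * y ^ μ * u)) * u ^ (δ / μ - 1) * (1 + u) ^ (-ρ) := by
  have hμ' : μ ≠ 0 := hμ.ne'
  have hyμ : (0:ℝ) < y ^ μ := Real.rpow_pos_of_pos hy μ
  -- Step 1: substitution v = x ^ μ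
  have h1 : ∫ x in Ioi (0:ℝ), x ^ (δ - 1) * (y ^ μ + x ^ μ) ^ (-ρ) * Real.exp (-(x ^ μ * c))
      = ∫ v in Ioi (0:ℝ),
          μ⁻¹ * (v ^ (δ / μ - 1) * (y ^ μ + v) ^ (-ρ) * Real.exp (-(v * c))) := by
    rw [← integral_comp_rpow_Ioi_of_pos
      (g := fun v => μ⁻¹ * (v ^ (δ / μ - 1) * (y ^ μ + v) ^ (-ρ) * Real.exp (-(v * c)))) hμ]
    refine setIntegral_congr_fun measurableSet_Ioi (fun x hx => ?_)
    have hx0 : (0:ℝ) < x := hx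
    have e1 : (x ^ μ) ^ (δ / μ - 1) = x ^ (δ - μ) := by
      rw [← Real.rpow_mul hx0.le]
      congr 1
      field_simp
    have e2 : x ^ (μ - 1) * x ^ (δ - μ) = x ^ (δ - 1) := by
      rw [← Real.rpow_add hx0]
      ring_nf
    rw [smul_eq_mul, e1]
    field_simp
    rw [← e2]
  rw [h1, MeasureTheory.integral_const_mul]
  -- Step 2: substitution v = y^μ * u
  have h2 := integral_comp_mul_left_Ioi
    (fun v => v ^ (δ / μ - 1) * (y ^ μ + v) ^ (-ρ) * Real.exp (-(v * c))) 0 hyμ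
  rw [mul_zero] at h2
  have h3 : ∫ v in Ioi (0:ℝ), v ^ (δ / μ - 1) * (y ^ μ + v) ^ (-ρ) * Real.exp (-(v * c))
      = (y ^ μ) * ∫ u in Ioi (0:ℝ),
          (y ^ μ * u) ^ (δ / μ - 1) * (y ^ μ + y ^ μ * u) ^ (-ρ) * Real.exp (-(y ^ μ * u * c)) := by
    rw [h2, smul_eq_mul, ← mul_assoc, mul_inv_cancel₀ hyμ.ne', one_mul]
  rw [h3]
  have h4 : ∫ u in Ioi (0:ℝ),
        (y ^ μ * u) ^ (δ / μ - 1) * (y ^ μ + y ^ μ * u) ^ (-ρ) * Real.exp (-(y ^ μ * u * c))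
      = ((y ^ μ) ^ (δ / μ - 1) * (y ^ μ) ^ (-ρ)) *
        ∫ u in Ioi (0:ℝ), Real.exp (-(c * y ^ μ * u)) * u ^ (δ / μ - 1) * (1 + u) ^ (-ρ) := by
    rw [← MeasureTheory.integral_const_mul]
    refine setIntegral_congr_fun measurableSet_Ioi (fun u hu => ?_)
    have hu0 : (0:ℝ) < u := hu
    have e1 : (y ^ μ * u) ^ (δ / μ - 1) = (y ^ μ) ^ (δ / μ - 1) * u ^ (δ / μ - 1) :=
      Real.mul_rpow hyμ.le hu0.le
    have e2 : (y ^ μ + y ^ μ * u) ^ (-ρ) = (y ^ μ) ^ (-ρ) * (1 + u) ^ (-ρ) := by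
      rw [← Real.mul_rpow hyμ.le (by linarith)]
      ring_nf
    have e3 : -(y ^ μ * u * c) = -(c * y ^ μ * u) := by ring
    rw [e1, e2, e3]
    ring
  rw [h4]
  have e5 : y ^ μ * ((y ^ μ) ^ (δ / μ - 1) * (y ^ μ) ^ (-ρ)) = y ^ (δ - μ * ρ) := by
    rw [← Real.rpow_mul hy.le, ← Real.rpow_mul hy.le,
      ← Real.rpow_add hy, ← Real.rpow_add hy]
    congr 1
    field_simp
    ring
  rw [← mul_assoc (y ^ μ), e5]
  ring

theorem gen_stieltjes_of_laplace (α δ μ ρ y : ℝ) (f : ℝ → ℝ)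
    (hμ : 0 < μ) (hα : μ < α) (hδ : 0 < δ) (hy : 0 < y)
    (hρ : 0 < ρ) (hρ' : ρ < 1 + δ / μ) (hf : Measurable f)
    (hint : IntegrableOn
      (fun p : ℝ × ℝ =>
        p.1 ^ (δ - 1) * (y ^ μ + p.1 ^ μ) ^ (-ρ) *
          (p.2 ^ (α - 1) * Real.exp (-(p.1 ^ μ * p.2 ^ μ)) * f p.2))
      (Ioi 0 ×ˢ Ioi 0)) :
    ∫ x in Ioi (0:ℝ), x ^ (δ - 1) * (y ^ μ + x ^ μ) ^ (-ρ) *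
        ∫ t in Ioi (0:ℝ), t ^ (α - 1) * Real.exp (-(x ^ μ * t ^ μ)) * f t
      = (y ^ (δ - μ * ρ) / μ) * Real.Gamma (δ / μ) *
        ∫ t in Ioi (0:ℝ), t ^ (α - 1) *
          tricomiU (δ / μ) (1 + δ / μ - ρ) (t ^ μ * y ^ μ) * f t := by
  have hΓ : Real.Gamma (δ / μ) ≠ 0 := (Real.Gamma_pos_of_pos (div_pos hδ hμ)).ne'
  have hF : Integrable
      (fun p : ℝ × ℝ => p.1 ^ (δ - 1) * (y ^ μ + p.1 ^ μ) ^ (-ρ) *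
          (p.2 ^ (α - 1) * Real.exp (-(p.1 ^ μ * p.2 ^ μ)) * f p.2))
      ((volume.restrict (Ioi 0)).prod (volume.restrict (Ioi 0))) := by
    rw [Measure.prod_restrict, ← Measure.volume_eq_prod]
    exact hint
  calc
    ∫ x in Ioi (0:ℝ), x ^ (δ - 1) * (y ^ μ + x ^ μ) ^ (-ρ) *
        ∫ t in Ioi (0:ℝ), t ^ (α - 1) * Real.exp (-(x ^ μ * t ^ μ)) * f t
      = ∫ x in Ioi (0:ℝ), ∫ t in Ioi (0:ℝ),
          x ^ (δ - 1) * (y ^ μ + x ^ μ) ^ (-ρ) *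
            (t ^ (α - 1) * Real.exp (-(x ^ μ * t ^ μ)) * f t) := by
        refine setIntegral_congr_fun measurableSet_Ioi (fun x hx => ?_)
        rw [MeasureTheory.integral_const_mul]
    _ = ∫ t in Ioi (0:ℝ), ∫ x in Ioi (0:ℝ),
          x ^ (δ - 1) * (y ^ μ + x ^ μ) ^ (-ρ) *
            (t ^ (α - 1) * Real.exp (-(x ^ μ * t ^ μ)) * f t) :=
        integral_integral_swap hF
    _ = ∫ t in Ioi (0:ℝ), ((y ^ (δ - μ * ρ) / μ) * Real.Gamma (δ / μ)) *
          (t ^ (α - 1) * tricomiU (δ / μ) (1 + δ / μ - ρ) (t ^ μ * y ^ μ) * f t) := by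
        refine setIntegral_congr_fun measurableSet_Ioi (fun t ht => ?_)
        have step1 : ∫ x in Ioi (0:ℝ),
            x ^ (δ - 1) * (y ^ μ + x ^ μ) ^ (-ρ) *
              (t ^ (α - 1) * Real.exp (-(x ^ μ * t ^ μ)) * f t)
            = (t ^ (α - 1) * f t) *
              ∫ x in Ioi (0:ℝ),
                x ^ (δ - 1) * (y ^ μ + x ^ μ) ^ (-ρ) * Real.exp (-(x ^ μ * t ^ μ)) := by
          rw [← MeasureTheory.integral_const_mul]
          refine setIntegral_congr_fun measurableSet_Ioi (fun x hx => ?_)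
          ring
        have step2 : ∫ u in Ioi (0:ℝ),
              Real.exp (-(t ^ μ * y ^ μ * u)) * u ^ (δ / μ - 1) * (1 + u) ^ (-ρ)
            = Real.Gamma (δ / μ) * tricomiU (δ / μ) (1 + δ / μ - ρ) (t ^ μ * y ^ μ) := by
          unfold tricomiU
          have e : 1 + δ / μ - ρ - δ / μ - 1 = -ρ := by ring
          rw [e, ← mul_assoc, mul_one_div, div_self hΓ, one_mul]
        rw [step1, key_sub δ μ ρ y (t ^ μ) hμ hy, step2]
        ring
    _ = (y ^ (δ - μ * ρ) / μ) * Real.Gamma (δ / μ) *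
        ∫ t in Ioi (0:ℝ), t ^ (α - 1) *
          tricomiU (δ / μ) (1 + δ / μ - ρ) (t ^ μ * y ^ μ) * f t := by
        rw [MeasureTheory.integral_const_mul]
end

section
/- Incomplete-type integral of the Tricomi U function: for real λ, δ, p > 0 and 0 < v < p, with c < 1, c not an integer, a > 0, 1 + a − c > 0: ∫₀^∞ x^{λ-1} e^{-p x^δ} U(a; c; v x^δ) dx = (1/(δ p^{λ/δ})) · Γ(λ/δ) Γ(λ/δ − c + 1) / Γ(a + λ/δ − c + 1) · ₂F₁(a, λ/δ; a + λ/δ − c + 1; 1 − v/p). -/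
/-!
The substitution `t = x ^ δ` reduces everything to `δ = 1`. Inserting the integral that defines
`U` and exchanging the order of integration (Tonelli: all integrands are nonnegative), the
`t`-integral becomes a Gamma integral, leaving
`Γ(s) / Γ(a) * ∫₀^∞ u^(a-1) (1+u)^(c-a-1) (p+vu)^(-s) du` with `s = λ/δ`. The substitution
`u = w / (1 - w)` turns this into `p^(-s)` times Euler's integral
`∫₀¹ w^(a-1) (1-w)^(b-1) (1-xw)^(-s) dw` with `b = s - c + 1` and `x = 1 - v/p ∈ [0, 1)`.
Expanding `(1 - xw)^(-s)` in its binomial series and integrating termwise against Beta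
integrals gives `B(a, b) ₂F₁(a, s; a + b; x)`.
-/

open MeasureTheory Set

noncomputable def twoF1 (a b c x : ℝ) : ℝ :=
  ∑' n : ℕ, ((ascPochhammer ℝ n).eval a * (ascPochhammer ℝ n).eval b /
    (ascPochhammer ℝ n).eval c) * x ^ n / n.factorial

open Real
open scoped ENNReal

theorem Real.Gamma_add_nat_eq_ascPochhammer_eval_mul {t : ℝ} (ht : 0 < t) (n : ℕ) :
    Gamma (t + n) = (ascPochhammer ℝ n).eval t * Gamma t := by
  induction n with
  | zero => simp
  | succ n ih =>
    rw [Nat.cast_succ, ← add_assoc, Gamma_add_one (by positivity), ih, ascPochhammer_succ_eval]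
    ring

theorem Real.hasSum_ascPochhammer_eval_mul_pow_div_factorial {s y : ℝ} (hy : |y| < 1) :
    HasSum (fun n : ℕ => (ascPochhammer ℝ n).eval s * y ^ n / n.factorial)
      ((1 - y) ^ (-s)) := by
  have h := (one_div_one_sub_rpow_hasFPowerSeriesOnBall_zero s).hasSum
    (y := y) (by simpa [Metric.mem_eball, edist_dist] using hy)
  rw [FormalMultilinearSeries.ofScalars_apply_eq', zero_add, one_div,
    ← rpow_neg (by linarith [le_abs_self y])] at h
  have coeff_eq (n : ℕ) :
      Ring.choose (s + n - 1) n • y ^ n = (ascPochhammer ℝ n).eval s * y ^ n / n.factorial := by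
    rw [← Ring.multichoose_eq, smul_eq_mul, eq_div_iff (by positivity), mul_right_comm,
      ← Polynomial.ascPochhammer_smeval_eq_eval,
      ← Ring.factorial_nsmul_multichoose_eq_ascPochhammer, nsmul_eq_mul]
    ring
  simpa only [coeff_eq] using h

theorem lintegral_rpow_mul_exp_neg_mul_Ioi {a r : ℝ} (ha : 0 < a) (hr : 0 < r) :
    ∫⁻ t in Ioi 0, ENNReal.ofReal (t ^ (a - 1) * exp (-(r * t)))
      = ENNReal.ofReal (r ^ (-a) * Gamma a) := by
  rw [rpow_neg hr.le, ← inv_rpow hr.le, ← one_div, ← integral_rpow_mul_exp_neg_mul_Ioi ha hr,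
    ofReal_integral_eq_lintegral_ofReal]
  · have h := integrableOn_rpow_mul_exp_neg_mul_rpow (s := a - 1) (by linarith) one_pos hr
    simp only [Real.rpow_one, neg_mul] at h
    exact h
  · exact ae_restrict_of_forall_mem measurableSet_Ioi fun t ht => by
      have := ht.out; positivity

theorem lintegral_rpow_mul_one_sub_rpow_Ioo {a b : ℝ} (ha : 0 < a) (hb : 0 < b) :
    ∫⁻ w in Ioo 0 1, ENNReal.ofReal (w ^ (a - 1) * (1 - w) ^ (b - 1))
      = ENNReal.ofReal (Gamma a * Gamma b / Gamma (a + b)) := by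
  have hB := ProbabilityTheory.beta_pos ha hb
  have h := ProbabilityTheory.lintegral_betaPDF_eq_one ha hb
  simp_rw [ProbabilityTheory.lintegral_betaPDF, mul_assoc,
    ENNReal.ofReal_mul (one_div_pos.2 hB).le] at h
  rw [lintegral_const_mul' _ _ ENNReal.ofReal_ne_top, ENNReal.ofReal_div_of_pos hB,
    ENNReal.ofReal_one, one_div, ← ENNReal.div_eq_inv_mul,
    ENNReal.div_eq_one_iff (by simpa using hB) ENNReal.ofReal_ne_top] at h
  exact h

theorem lintegral_euler_integrand_eq_tsum {a b s x : ℝ} (ha : 0 < a) (hb : 0 < b) (hs : 0 < s)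
    (hx0 : 0 ≤ x) (hx1 : x < 1) :
    ∫⁻ w in Ioo 0 1, ENNReal.ofReal (w ^ (a - 1) * (1 - w) ^ (b - 1) * (1 - x * w) ^ (-s))
      = ∑' n : ℕ, ENNReal.ofReal ((ascPochhammer ℝ n).eval s * x ^ n / n.factorial *
          (Gamma (a + n) * Gamma b / Gamma (a + n + b))) := by
  set coeff : ℕ → ℝ := fun n => (ascPochhammer ℝ n).eval s * x ^ n / n.factorial
  have coeff_nonneg (n : ℕ) : 0 ≤ coeff n := by
    have := ascPochhammer_pos n s hs
    positivity
  have expand : ∀ w ∈ Ioo (0 : ℝ) 1,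
      ENNReal.ofReal (w ^ (a - 1) * (1 - w) ^ (b - 1) * (1 - x * w) ^ (-s))
        = ∑' n : ℕ, ENNReal.ofReal (coeff n) *
            ENNReal.ofReal (w ^ (a + n - 1) * (1 - w) ^ (b - 1)) := by
    rintro w ⟨hw0, hw1⟩
    have hxw : |x * w| < 1 := by
      rw [abs_of_nonneg (by positivity)]
      nlinarith
    have hsum := (hasSum_ascPochhammer_eval_mul_pow_div_factorial (s := s) hxw).mul_left
      (w ^ (a - 1) * (1 - w) ^ (b - 1))
    have term_eq (n : ℕ) : w ^ (a - 1) * (1 - w) ^ (b - 1) *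
        ((ascPochhammer ℝ n).eval s * (x * w) ^ n / n.factorial)
          = coeff n * (w ^ (a + n - 1) * (1 - w) ^ (b - 1)) := by
      rw [add_sub_right_comm, rpow_add hw0, rpow_natCast]
      ring
    simp only [term_eq] at hsum
    rw [← hsum.tsum_eq, ENNReal.ofReal_tsum_of_nonneg _ hsum.summable]
    · simp only [ENNReal.ofReal_mul (coeff_nonneg _)]
    · intro n
      have := coeff_nonneg n
      have : 0 ≤ 1 - w := by linarith
      positivity
  rw [setLIntegral_congr_fun measurableSet_Ioo expand, lintegral_tsum fun n => by fun_prop]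
  refine tsum_congr fun n => ?_
  rw [lintegral_const_mul' _ _ ENNReal.ofReal_ne_top,
    lintegral_rpow_mul_one_sub_rpow_Ioo (by positivity) hb,
    ← ENNReal.ofReal_mul (coeff_nonneg n)]

theorem integral_euler_integrand_eq_mul_twoF1 {a b s x : ℝ} (ha : 0 < a) (hb : 0 < b)
    (hs : 0 < s) (hx0 : 0 ≤ x) (hx1 : x < 1) :
    ∫ w in Ioo 0 1, w ^ (a - 1) * (1 - w) ^ (b - 1) * (1 - x * w) ^ (-s)
      = Gamma a * Gamma b / Gamma (a + b) * twoF1 a s (a + b) x := by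
  have hab := add_pos ha hb
  have term_nonneg (n : ℕ) : 0 ≤ (ascPochhammer ℝ n).eval s * x ^ n / n.factorial *
      (Gamma (a + n) * Gamma b / Gamma (a + n + b)) := by
    have := ascPochhammer_pos n s hs
    have := Gamma_pos_of_pos (show 0 < a + n by positivity)
    have := Gamma_pos_of_pos hb
    have := Gamma_pos_of_pos (show 0 < a + n + b by positivity)
    positivity
  -- `toReal` sends an infinite sum in `ℝ≥0∞` to `0`, as `tsum` does a divergent real series,
  -- so the convergence of the `₂F₁` series is never needed.
  rw [integral_eq_lintegral_of_nonneg_ae, lintegral_euler_integrand_eq_tsum ha hb hs hx0 hx1,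
    ENNReal.tsum_toReal_eq fun _ => ENNReal.ofReal_ne_top, twoF1, ← tsum_mul_left]
  · refine tsum_congr fun n => ?_
    rw [ENNReal.toReal_ofReal (term_nonneg n), add_right_comm,
      Gamma_add_nat_eq_ascPochhammer_eval_mul ha, Gamma_add_nat_eq_ascPochhammer_eval_mul hab]
    have := (ascPochhammer_pos n _ hab).ne'
    have := (Gamma_pos_of_pos hab).ne'
    field_simp
  · refine ae_restrict_of_forall_mem measurableSet_Ioo fun w ⟨hw0, hw1⟩ => ?_
    have : 0 < 1 - x * w := by nlinarith
    have : 0 < 1 - w := by linarith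
    positivity
  · exact Measurable.aestronglyMeasurable (by fun_prop)

theorem lintegral_Ioi_eq_lintegral_Ioo_div_one_sub (f : ℝ → ℝ≥0∞) :
    ∫⁻ u in Ioi 0, f u
      = ∫⁻ w in Ioo 0 1, ENNReal.ofReal ((1 - w) ^ 2)⁻¹ * f (w / (1 - w)) := by
  have image_eq : (fun w : ℝ => w / (1 - w)) '' Ioo 0 1 = Ioi 0 := by
    ext u
    refine ⟨fun ⟨w, ⟨hw0, hw1⟩, hu⟩ => hu ▸ div_pos hw0 (by linarith), fun hu => ?_⟩
    have hu : 0 < u := hu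
    refine ⟨u / (1 + u), ⟨by positivity, (div_lt_one (by positivity)).2 (by linarith)⟩, ?_⟩
    field_simp
    ring
  have injOn : InjOn (fun w : ℝ => w / (1 - w)) (Ioo 0 1) := by
    rintro w₁ ⟨-, hw₁⟩ w₂ ⟨-, hw₂⟩ h
    have : 1 - w₁ ≠ 0 := by linarith
    have : 1 - w₂ ≠ 0 := by linarith
    field_simp at h
    linarith
  have hasDeriv : ∀ w ∈ Ioo (0 : ℝ) 1,
      HasDerivWithinAt (fun w : ℝ => w / (1 - w)) ((1 - w) ^ 2)⁻¹ (Ioo 0 1) w := by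
    rintro w ⟨-, hw⟩
    have hq : 1 - w ≠ 0 := by linarith
    refine (((hasDerivAt_id' w).div ((hasDerivAt_id' w).const_sub 1) hq).congr_deriv
      ?_).hasDerivWithinAt
    field_simp
    ring
  rw [← image_eq, lintegral_image_eq_lintegral_abs_deriv_mul measurableSet_Ioo hasDeriv injOn]
  refine setLIntegral_congr_fun measurableSet_Ioo fun w _ => ?_
  rw [abs_of_nonneg (by positivity)]

theorem lintegral_Ioi_rpow_mul_one_add_rpow_mul_add_mul_rpow {a c s p v : ℝ} (hp : 0 < p)
    (hv : 0 ≤ v) :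
    ∫⁻ u in Ioi 0, ENNReal.ofReal (u ^ (a - 1) * (1 + u) ^ (c - a - 1) * (p + v * u) ^ (-s))
      = ENNReal.ofReal (p ^ (-s)) * ∫⁻ w in Ioo 0 1, ENNReal.ofReal
          (w ^ (a - 1) * (1 - w) ^ (s - c + 1 - 1) * (1 - (1 - v / p) * w) ^ (-s)) := by
  rw [lintegral_Ioi_eq_lintegral_Ioo_div_one_sub,
    ← lintegral_const_mul' _ _ ENNReal.ofReal_ne_top]
  refine setLIntegral_congr_fun measurableSet_Ioo fun w ⟨hw0, hw1⟩ => ?_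
  set q := 1 - w
  have hq : 0 < q := by linarith
  have hr : 0 < 1 - (1 - v / p) * w := by
    have : 0 ≤ v / p * w := by positivity
    linarith
  have one_add_eq : 1 + w / q = q⁻¹ := by field_simp; ring
  have add_mul_eq : p + v * (w / q) = p * (1 - (1 - v / p) * w) * q⁻¹ := by field_simp; ring
  rw [← ENNReal.ofReal_mul (by positivity), ← ENNReal.ofReal_mul (by positivity), one_add_eq,
    add_mul_eq, div_eq_mul_inv, mul_rpow hw0.le (by positivity),
    mul_rpow (by positivity) (by positivity), mul_rpow hp.le hr.le, ← rpow_neg_one q,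
    ← rpow_natCast, ← rpow_neg hq.le, ← rpow_mul hq.le, ← rpow_mul hq.le,
    ← rpow_mul hq.le]
  congr 1
  have collect : q ^ (-((2 : ℕ) : ℝ)) *
      (q ^ (-1 * (a - 1)) * (q ^ (-1 * (c - a - 1)) * q ^ (-1 * -s))) = q ^ (s - c + 1 - 1) := by
    rw [← rpow_add hq, ← rpow_add hq, ← rpow_add hq]
    congr 1
    push_cast
    ring
  rw [← collect]
  ring

theorem tricomiU_nonneg {a : ℝ} (ha : 0 ≤ a) (c z : ℝ) : 0 ≤ tricomiU a c z :=
  mul_nonneg (one_div_nonneg.2 (Gamma_nonneg_of_nonneg ha)) <|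
    setIntegral_nonneg measurableSet_Ioi fun u hu => by have := hu.out; positivity

theorem stronglyMeasurable_tricomiU (a c : ℝ) : StronglyMeasurable (tricomiU a c) :=
  (StronglyMeasurable.integral_prod_right' (f := fun q : ℝ × ℝ =>
    exp (-(q.1 * q.2)) * q.2 ^ (a - 1) * (1 + q.2) ^ (c - a - 1)) (by fun_prop)).const_mul _

theorem integrableOn_tricomiU_integrand {a c z : ℝ} (ha : 0 < a) (hca : c ≤ a + 1)
    (hz : 0 < z) :
    IntegrableOn (fun u => exp (-(z * u)) * u ^ (a - 1) * (1 + u) ^ (c - a - 1)) (Ioi 0) := by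
  have hdom := integrableOn_rpow_mul_exp_neg_mul_rpow (s := a - 1) (by linarith) one_pos hz
  simp only [Real.rpow_one, neg_mul] at hdom
  refine hdom.mono' (by fun_prop) (ae_restrict_of_forall_mem measurableSet_Ioi fun u hu => ?_)
  have hu : 0 < u := hu
  rw [norm_of_nonneg (by positivity), mul_comm (exp _)]
  exact mul_le_of_le_one_right (by positivity)
    (rpow_le_one_of_one_le_of_nonpos (by linarith) (by linarith))

theorem ofReal_tricomiU {a c z : ℝ} (ha : 0 < a) (hca : c ≤ a + 1) (hz : 0 < z) :
    ENNReal.ofReal (tricomiU a c z) = ENNReal.ofReal (1 / Gamma a) *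
      ∫⁻ u in Ioi 0, ENNReal.ofReal (exp (-(z * u)) * u ^ (a - 1) * (1 + u) ^ (c - a - 1)) := by
  rw [tricomiU, ENNReal.ofReal_mul (by positivity),
    ofReal_integral_eq_lintegral_ofReal (integrableOn_tricomiU_integrand ha hca hz)]
  exact ae_restrict_of_forall_mem measurableSet_Ioi fun u hu => by have := hu.out; positivity

theorem lintegral_rpow_mul_exp_mul_tricomiU {a c s p v : ℝ} (ha : 0 < a) (hca : c ≤ a + 1)
    (hs : 0 < s) (hp : 0 < p) (hv : 0 < v) :
    ∫⁻ t in Ioi 0, ENNReal.ofReal (t ^ (s - 1) * exp (-(p * t)) * tricomiU a c (v * t))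
      = ENNReal.ofReal (1 / Gamma a) * ENNReal.ofReal (Gamma s) * ∫⁻ u in Ioi 0,
          ENNReal.ofReal (u ^ (a - 1) * (1 + u) ^ (c - a - 1) * (p + v * u) ^ (-s)) := by
  calc ∫⁻ t in Ioi 0, ENNReal.ofReal (t ^ (s - 1) * exp (-(p * t)) * tricomiU a c (v * t))
      = ∫⁻ t in Ioi 0, ENNReal.ofReal (1 / Gamma a) * ∫⁻ u in Ioi 0,
          ENNReal.ofReal (u ^ (a - 1) * (1 + u) ^ (c - a - 1)) *
            ENNReal.ofReal (t ^ (s - 1) * exp (-((p + v * u) * t))) := by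
        refine setLIntegral_congr_fun measurableSet_Ioi fun t ht => ?_
        have ht : 0 < t := ht
        rw [ENNReal.ofReal_mul (by positivity), ofReal_tricomiU ha hca (by positivity),
          mul_left_comm, ← lintegral_const_mul' _ _ ENNReal.ofReal_ne_top]
        congr 1
        refine setLIntegral_congr_fun measurableSet_Ioi fun u hu => ?_
        have hu : 0 < u := hu
        rw [← ENNReal.ofReal_mul (by positivity), ← ENNReal.ofReal_mul (by positivity),
          show -((p + v * u) * t) = -(p * t) + -(v * t * u) by ring, exp_add]
        ring_nf
    _ = ENNReal.ofReal (1 / Gamma a) * ∫⁻ u in Ioi 0,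
          ENNReal.ofReal (u ^ (a - 1) * (1 + u) ^ (c - a - 1)) *
            ENNReal.ofReal ((p + v * u) ^ (-s) * Gamma s) := by
        rw [lintegral_const_mul _ (by fun_prop), lintegral_lintegral_swap (by fun_prop)]
        congr 1
        refine setLIntegral_congr_fun measurableSet_Ioi fun u hu => ?_
        have hu : 0 < u := hu
        rw [lintegral_const_mul' _ _ ENNReal.ofReal_ne_top,
          lintegral_rpow_mul_exp_neg_mul_Ioi hs (by positivity)]
    _ = _ := by
        rw [mul_assoc, ← lintegral_const_mul' (ENNReal.ofReal (Gamma s)) _ ENNReal.ofReal_ne_top]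
        congr 1
        refine setLIntegral_congr_fun measurableSet_Ioi fun u hu => ?_
        have hu : 0 < u := hu
        have : 0 ≤ (1 + u) ^ (c - a - 1) := by positivity
        rw [← ENNReal.ofReal_mul (by positivity), ← ENNReal.ofReal_mul (by positivity)]
        ring_nf

theorem integral_rpow_mul_exp_mul_tricomiU {a c s p v : ℝ} (ha : 0 < a) (hca : c ≤ a + 1)
    (hs : 0 < s) (hb : 0 < s - c + 1) (hp : 0 < p) (hv : 0 < v) (hvp : v ≤ p) :
    ∫ t in Ioi 0, t ^ (s - 1) * exp (-(p * t)) * tricomiU a c (v * t)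
      = 1 / Gamma a * Gamma s * p ^ (-s) * (Gamma a * Gamma (s - c + 1) / Gamma (a + (s - c + 1))
          * twoF1 a s (a + (s - c + 1)) (1 - v / p)) := by
  have hx0 : 0 ≤ 1 - v / p := sub_nonneg.2 ((div_le_one hp).2 hvp)
  have hx1 : 1 - v / p < 1 := sub_lt_self 1 (by positivity)
  have hU := (stronglyMeasurable_tricomiU a c).measurable
  rw [integral_eq_lintegral_of_nonneg_ae, lintegral_rpow_mul_exp_mul_tricomiU ha hca hs hp hv,
    lintegral_Ioi_rpow_mul_one_add_rpow_mul_add_mul_rpow hp hv.le,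
    ← integral_euler_integrand_eq_mul_twoF1 ha hb hs hx0 hx1, integral_eq_lintegral_of_nonneg_ae]
  · simp only [ENNReal.toReal_mul,
      ENNReal.toReal_ofReal (one_div_nonneg.2 (Gamma_pos_of_pos ha).le),
      ENNReal.toReal_ofReal (Gamma_pos_of_pos hs).le, ENNReal.toReal_ofReal (rpow_nonneg hp.le _),
      mul_assoc]
  · refine ae_restrict_of_forall_mem measurableSet_Ioo fun w ⟨hw0, hw1⟩ => ?_
    have : 0 < 1 - (1 - v / p) * w := by nlinarith
    have : 0 < 1 - w := by linarith
    positivity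
  · exact Measurable.aestronglyMeasurable (by fun_prop)
  · exact ae_restrict_of_forall_mem measurableSet_Ioi fun t ht => by
      have := tricomiU_nonneg ha.le c (v * t)
      have := ht.out
      positivity
  · exact Measurable.aestronglyMeasurable (by fun_prop)

theorem integral_rpow_mul_comp_rpow_Ioi (g : ℝ → ℝ) {δ : ℝ} (hδ : 0 < δ) (lam : ℝ) :
    ∫ x in Ioi 0, x ^ (lam - 1) * g (x ^ δ)
      = δ⁻¹ * ∫ t in Ioi 0, t ^ (lam / δ - 1) * g t := by
  rw [← integral_comp_rpow_Ioi_of_pos (g := fun t => t ^ (lam / δ - 1) * g t) hδ,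
    ← integral_const_mul]
  refine setIntegral_congr_fun measurableSet_Ioi fun x hx => ?_
  have hx : 0 < x := hx
  rw [smul_eq_mul, ← rpow_mul hx.le, mul_sub, mul_div_cancel₀ _ hδ.ne', mul_one,
    ← mul_assoc, ← mul_assoc, inv_mul_cancel_left₀ hδ.ne', ← rpow_add hx]
  ring_nf

theorem integral_tricomiU_general (lam δ p v a c : ℝ)
    (hδ : 0 < δ) (hp : 0 < p) (hv : 0 < v) (hvp : v < p)
    (ha : 0 < a) (hac : 0 < 1 + a - c)
    (h1 : 0 < lam / δ) (h2 : 0 < lam / δ - c + 1) :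
    ∫ x in Ioi (0:ℝ), x ^ (lam - 1) * Real.exp (-(p * x ^ δ)) * tricomiU a c (v * x ^ δ)
      = (1 / (δ * p ^ (lam / δ))) *
        (Real.Gamma (lam / δ) * Real.Gamma (lam / δ - c + 1) / Real.Gamma (a + lam / δ - c + 1)) *
        twoF1 a (lam / δ) (a + lam / δ - c + 1) (1 - v / p) := by
  calc ∫ x in Ioi 0, x ^ (lam - 1) * exp (-(p * x ^ δ)) * tricomiU a c (v * x ^ δ)
      = δ⁻¹ * ∫ t in Ioi 0, t ^ (lam / δ - 1) * exp (-(p * t)) * tricomiU a c (v * t) := by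
        simpa only [mul_assoc] using integral_rpow_mul_comp_rpow_Ioi
          (fun t => exp (-(p * t)) * tricomiU a c (v * t)) hδ lam
    _ = _ := by
        rw [integral_rpow_mul_exp_mul_tricomiU ha (by linarith) h1 h2 hp hv hvp.le,
          show a + (lam / δ - c + 1) = a + lam / δ - c + 1 by ring, rpow_neg hp.le]
        have := (Gamma_pos_of_pos ha).ne'
        have := (rpow_pos_of_pos hp (lam / δ)).ne'
        field_simp

theorem integral_tricomiU (lam δ p v a c : ℝ)
    (hlam : 0 < lam) (hδ : 0 < δ) (hp : 0 < p) (hv : 0 < v) (hvp : v < p)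
    (hc : c < 1) (hcZ : ∀ n : ℤ, c ≠ n) (ha : 0 < a) (hac : 0 < 1 + a - c)
    (h1 : 0 < lam / δ) (h2 : 0 < lam / δ - c + 1) :
    ∫ x in Ioi (0:ℝ), x ^ (lam - 1) * Real.exp (-(p * x ^ δ)) * tricomiU a c (v * x ^ δ)
      = (1 / (δ * p ^ (lam / δ))) *
        (Real.Gamma (lam / δ) * Real.Gamma (lam / δ - c + 1) / Real.Gamma (a + lam / δ - c + 1)) *
        twoF1 a (lam / δ) (a + lam / δ - c + 1) (1 - v / p) :=
  integral_tricomiU_general lam δ p v a c hδ hp hv hvp ha hac h1 h2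
end

section
/- Parseval–Goldstein identity with generalized Fourier sine transform: ∫₀^∞ y^{λ-1} L_{α,μ}{f(t); y} F_{s,δ,μ}{g(x); y} dy = (1/μ) Γ(λ/μ) ∫₀^∞ t^{α-1} f(t) [∫₀^∞ x^{δ-1} (t^{2μ} + x^{2μ})^{-λ/(2μ)} sin((λ/μ) arctan(x^μ/t^μ)) g(x) dx] dt. -/
/-!
Fubini moves the `y`-integral innermost. For fixed `t, x > 0` the substitution `u = y ^ μ` turns
it into `∫ u ^ (s - 1) e^{-a u} sin (b u) du` with `s = λ / μ`, `a = t ^ μ`, `b = x ^ μ`, which is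
the imaginary part of the Laplace transform `Γ(s) z ^ (-s)` of `u ^ (s - 1)` at `z = a - b i`.
That formula holds for real `z > 0` and continues analytically to `Re z > 0`, because the Laplace
transform is the complex moment generating function of `-u` under the measure `u ^ (s - 1) du`.
-/

open MeasureTheory Set ProbabilityTheory Complex
open scoped ENNReal

noncomputable def rpowWeight (s : ℝ) : Measure ℝ :=
  (volume.restrict (Ioi 0)).withDensity fun t => ((t ^ (s - 1)).toNNReal : ℝ≥0∞)

section rpowWeight

variable {E : Type*} [NormedAddCommGroup E] [NormedSpace ℝ E] {s : ℝ} {g : ℝ → E}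

lemma toNNReal_rpow_smul_eqOn (s : ℝ) (g : ℝ → E) :
    EqOn (fun t : ℝ => (t ^ (s - 1)).toNNReal • g t) (fun t => t ^ (s - 1) • g t) (Ioi 0) :=
  fun t ht => by
    simp only [NNReal.smul_def]
    rw [Real.coe_toNNReal _ (Real.rpow_nonneg (le_of_lt ht) _)]

lemma integral_rpowWeight (s : ℝ) (g : ℝ → E) :
    ∫ t, g t ∂rpowWeight s = ∫ t in Ioi 0, t ^ (s - 1) • g t := by
  rw [rpowWeight, integral_withDensity_eq_integral_smul (by fun_prop)]
  exact setIntegral_congr_fun measurableSet_Ioi (toNNReal_rpow_smul_eqOn s g)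

lemma integrable_rpowWeight_iff :
    Integrable g (rpowWeight s) ↔ IntegrableOn (fun t => t ^ (s - 1) • g t) (Ioi 0) := by
  rw [rpowWeight, integrable_withDensity_iff_integrable_smul (by fun_prop)]
  exact integrableOn_congr_fun (toNNReal_rpow_smul_eqOn s g) measurableSet_Ioi

end rpowWeight

lemma Ioi_subset_integrableExpSet_rpowWeight {s : ℝ} (hs : 0 < s) :
    Ioi 0 ⊆ integrableExpSet (fun t => -t) (rpowWeight s) := fun r hr => by
  simpa [integrableExpSet, integrable_rpowWeight_iff, Real.rpow_one] using
    integrableOn_rpow_mul_exp_neg_mul_rpow (by linarith : (-1 : ℝ) < s - 1) zero_lt_one hr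

lemma mgf_neg_rpowWeight {s r : ℝ} (hs : 0 < s) (hr : 0 < r) :
    mgf (fun t => -t) (rpowWeight s) r = Real.Gamma s * r ^ (-s) := by
  simp only [mgf, integral_rpowWeight, smul_eq_mul, mul_neg]
  rw [Real.integral_rpow_mul_exp_neg_mul_Ioi hs hr, one_div, Real.inv_rpow hr.le,
    Real.rpow_neg hr.le, mul_comm]

lemma complexMGF_neg_rpowWeight {s : ℝ} (hs : 0 < s) {z : ℂ} (hz : 0 < z.re) :
    complexMGF (fun t => -t) (rpowWeight s) z = Complex.Gamma s * z ^ (-(s : ℂ)) := by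
  set U : Set ℂ := {w | 0 < w.re}
  have hU : IsOpen U := isOpen_lt continuous_const Complex.continuous_re
  have hmgf : AnalyticOnNhd ℂ (complexMGF (fun t => -t) (rpowWeight s)) U :=
    analyticOnNhd_complexMGF.mono fun w (hw : 0 < w.re) =>
      interior_mono (Ioi_subset_integrableExpSet_rpowWeight hs) (by rwa [interior_Ioi])
  have hgamma : AnalyticOnNhd ℂ (fun w => Complex.Gamma s * w ^ (-(s : ℂ))) U :=
    DifferentiableOn.analyticOnNhd (fun w hw => ((differentiableAt_id.cpow
      (differentiableAt_const _) (Complex.mem_slitPlane_iff.2 (Or.inl hw))).const_mul _)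
      |>.differentiableWithinAt) hU
  have hreal : ∀ᶠ r : ℝ in nhdsWithin 1 {1}ᶜ, complexMGF (fun t => -t) (rpowWeight s) r
      = Complex.Gamma s * (r : ℂ) ^ (-(s : ℂ)) := by
    filter_upwards [nhdsWithin_le_nhds (Ioi_mem_nhds zero_lt_one)] with r hr
    rw [complexMGF_ofReal, mgf_neg_rpowWeight hs hr, Complex.ofReal_mul,
      Complex.ofReal_cpow hr.le, Complex.Gamma_ofReal]
    push_cast
    rfl
  have hofReal : Filter.Tendsto ((↑) : ℝ → ℂ) (nhdsWithin 1 {1}ᶜ) (nhdsWithin 1 {1}ᶜ) :=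
    tendsto_nhdsWithin_of_tendsto_nhds_of_eventually_within _
      (Complex.continuous_ofReal.tendsto' 1 1 Complex.ofReal_one |>.mono_left nhdsWithin_le_nhds)
      (eventually_nhdsWithin_of_forall fun r hr => by simpa using hr)
  exact hmgf.eqOn_of_preconnected_of_frequently_eq hgamma
    (convex_halfSpace_re_gt 0).isPreconnected (by simp [U])
    (hofReal.frequently hreal.frequently) hz

namespace Complex

lemma arg_ofReal_sub_ofReal_mul_I {a : ℝ} (ha : 0 < a) (b : ℝ) :
    arg (a - b * I) = -Real.arctan (b / a) := by
  obtain ⟨h₁, h₂⟩ := abs_lt.mp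
    (abs_arg_lt_pi_div_two_iff.mpr (Or.inl (by simpa using ha : 0 < ((a : ℂ) - b * I).re)))
  have htan : Real.tan (arg (a - b * I)) = -(b / a) := by
    rw [tan_arg]
    simp [neg_div]
  rw [← Real.arctan_tan h₁ h₂, htan, Real.arctan_neg]

lemma norm_ofReal_sub_ofReal_mul_I (a b : ℝ) : ‖(a : ℂ) - b * I‖ = √(a ^ 2 + b ^ 2) := by
  rw [norm_def, normSq_apply]
  simp [sq]

lemma im_ofReal_sub_ofReal_mul_I_cpow_neg {a : ℝ} (ha : 0 < a) (b s : ℝ) :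
    (((a : ℂ) - b * I) ^ (-(s : ℂ))).im
      = (a ^ 2 + b ^ 2) ^ (-(s / 2)) * Real.sin (s * Real.arctan (b / a)) := by
  rw [← ofReal_neg, cpow_ofReal_im, arg_ofReal_sub_ofReal_mul_I ha, norm_ofReal_sub_ofReal_mul_I,
    Real.sqrt_eq_rpow, ← Real.rpow_mul (by positivity)]
  ring_nf

end Complex

lemma integral_rpow_mul_exp_neg_mul_mul_sin {s a : ℝ} (hs : 0 < s) (ha : 0 < a) (b : ℝ) :
    ∫ u in Ioi 0, u ^ (s - 1) * (Real.exp (-(a * u)) * Real.sin (b * u))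
      = Real.Gamma s * ((a ^ 2 + b ^ 2) ^ (-(s / 2)) * Real.sin (s * Real.arctan (b / a))) := by
  set z : ℂ := a - b * I
  have hz : 0 < z.re := by simpa [z] using ha
  have hint : Integrable (fun u : ℝ => cexp (z * ((-u : ℝ) : ℂ))) (rpowWeight s) :=
    integrable_cexp_mul_of_re_mem_integrableExpSet (by fun_prop)
      (Ioi_subset_integrableExpSet_rpowWeight hs hz)
  have him (u : ℝ) : (cexp (z * ((-u : ℝ) : ℂ))).im = Real.exp (-(a * u)) * Real.sin (b * u) := by
    rw [exp_im]
    simp [z]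
  calc _ = ∫ u, (cexp (z * ((-u : ℝ) : ℂ))).im ∂rpowWeight s := by
        simp only [integral_rpowWeight, him, smul_eq_mul]
    _ = (complexMGF (fun t => -t) (rpowWeight s) z).im := imCLM.integral_comp_comm hint
    _ = _ := by
      rw [complexMGF_neg_rpowWeight hs hz, Gamma_ofReal, im_ofReal_mul,
        im_ofReal_sub_ofReal_mul_I_cpow_neg ha]

lemma integral_rpow_mul_exp_neg_rpow_mul_mul_sin_rpow_mul {lam μ a : ℝ} (hμ : 0 < μ)
    (hlam : 0 < lam) (ha : 0 < a) (b : ℝ) :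
    ∫ y in Ioi 0, y ^ (lam - 1) * Real.exp (-(y ^ μ * a)) * Real.sin (y ^ μ * b)
      = 1 / μ * Real.Gamma (lam / μ) *
        ((a ^ 2 + b ^ 2) ^ (-(lam / (2 * μ))) * Real.sin (lam / μ * Real.arctan (b / a))) := by
  have hsub := integral_comp_rpow_Ioi_of_pos hμ
    (g := fun u => u ^ (lam / μ - 1) * (Real.exp (-(a * u)) * Real.sin (b * u)))
  rw [integral_rpow_mul_exp_neg_mul_mul_sin (div_pos hlam hμ) ha b, div_div, mul_comm μ 2] at hsub
  rw [mul_assoc, ← hsub, ← integral_const_mul]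
  refine setIntegral_congr_fun measurableSet_Ioi fun y (hy : 0 < y) => ?_
  have hpow : y ^ (μ - 1) * (y ^ μ) ^ (lam / μ - 1) = y ^ (lam - 1) := by
    rw [← Real.rpow_mul hy.le, ← Real.rpow_add hy]
    congr 1
    field_simp
    ring
  simp only [smul_eq_mul]
  rw [← hpow]
  field_simp

lemma integral_integral_integral_rotate {α β γ E : Type*} [MeasurableSpace α] [MeasurableSpace β]
    [MeasurableSpace γ] [NormedAddCommGroup E] [NormedSpace ℝ E] {μ : Measure α} {ν : Measure β}
    {ρ : Measure γ} [SFinite μ] [SFinite ν] [SFinite ρ] {F : α × β × γ → E}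
    (hF : Integrable F (μ.prod (ν.prod ρ))) :
    ∫ a, ∫ b, ∫ c, F (a, b, c) ∂ρ ∂ν ∂μ = ∫ b, ∫ c, ∫ a, F (a, b, c) ∂μ ∂ρ ∂ν := by
  calc ∫ a, ∫ b, ∫ c, F (a, b, c) ∂ρ ∂ν ∂μ = ∫ a, ∫ p, F (a, p) ∂ν.prod ρ ∂μ :=
        integral_congr_ae <| hF.prod_right_ae.mono fun a ha => (integral_prod _ ha).symm
    _ = ∫ p, ∫ a, F (a, p) ∂μ ∂ν.prod ρ := integral_integral_swap hF
    _ = ∫ b, ∫ c, ∫ a, F (a, b, c) ∂μ ∂ρ ∂ν := integral_prod _ hF.swap.integral_prod_left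

theorem parseval_goldstein_fourier_sine_general (α δ lam μ : ℝ) (f g : ℝ → ℝ)
    (hμ : 0 < μ) (hlam : 0 < lam / (2 * μ))
    (hint : IntegrableOn
      (fun p : ℝ × ℝ × ℝ =>
        p.1 ^ (lam - 1) *
          (p.2.1 ^ (α - 1) * Real.exp (-(p.1 ^ μ * p.2.1 ^ μ)) * f p.2.1) *
          (p.2.2 ^ (δ - 1) * Real.sin (p.1 ^ μ * p.2.2 ^ μ) * g p.2.2))
      (Ioi 0 ×ˢ Ioi 0 ×ˢ Ioi 0)) :
    ∫ y in Ioi (0:ℝ), y ^ (lam - 1) *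
        (∫ t in Ioi (0:ℝ), t ^ (α - 1) * Real.exp (-(y ^ μ * t ^ μ)) * f t) *
        (∫ x in Ioi (0:ℝ), x ^ (δ - 1) * Real.sin (y ^ μ * x ^ μ) * g x)
      = (1 / μ) * Real.Gamma (lam / μ) *
        ∫ t in Ioi (0:ℝ), t ^ (α - 1) * f t *
          ∫ x in Ioi (0:ℝ), x ^ (δ - 1) * (t ^ (2 * μ) + x ^ (2 * μ)) ^ (-(lam / (2 * μ))) *
            Real.sin ((lam / μ) * Real.arctan (x ^ μ / t ^ μ)) * g x := by
  have hlam' : 0 < lam := (div_pos_iff_of_pos_right (by positivity)).mp hlam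
  have hsq (r : ℝ) (hr : 0 < r) : (r ^ μ) ^ 2 = r ^ (2 * μ) := by
    rw [← Real.rpow_natCast, ← Real.rpow_mul hr.le]
    ring_nf
  rw [IntegrableOn, Measure.volume_eq_prod, Measure.volume_eq_prod, ← Measure.prod_restrict,
    ← Measure.prod_restrict] at hint
  calc _ = ∫ y in Ioi 0, ∫ t in Ioi 0, ∫ x in Ioi 0, y ^ (lam - 1) *
          (t ^ (α - 1) * Real.exp (-(y ^ μ * t ^ μ)) * f t) *
          (x ^ (δ - 1) * Real.sin (y ^ μ * x ^ μ) * g x) := by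
        simp only [integral_const_mul, integral_mul_const]
    _ = ∫ t in Ioi 0, ∫ x in Ioi 0, ∫ y in Ioi 0, y ^ (lam - 1) *
          (t ^ (α - 1) * Real.exp (-(y ^ μ * t ^ μ)) * f t) *
          (x ^ (δ - 1) * Real.sin (y ^ μ * x ^ μ) * g x) :=
        integral_integral_integral_rotate hint
    _ = _ := by
      simp only [← integral_const_mul]
      refine setIntegral_congr_fun measurableSet_Ioi fun t (ht : 0 < t) => ?_
      refine setIntegral_congr_fun measurableSet_Ioi fun x (hx : 0 < x) => ?_
      have hkernel := integral_rpow_mul_exp_neg_rpow_mul_mul_sin_rpow_mul hμ hlam'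
        (Real.rpow_pos_of_pos ht μ) (x ^ μ)
      rw [hsq t ht, hsq x hx] at hkernel
      calc _ = t ^ (α - 1) * f t * (x ^ (δ - 1) * g x) * ∫ y in Ioi 0,
            y ^ (lam - 1) * Real.exp (-(y ^ μ * t ^ μ)) * Real.sin (y ^ μ * x ^ μ) := by
            rw [← integral_const_mul]
            congr 1 with y
            ring
        _ = _ := by
          rw [hkernel]
          ring

theorem parseval_goldstein_fourier_sine (α δ lam μ : ℝ) (f g : ℝ → ℝ)
    (hμ : 0 < μ) (hα : μ < α) (hlam : 0 < lam / (2 * μ))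
    (hf : Measurable f) (hg : Measurable g)
    (hint : IntegrableOn
      (fun p : ℝ × ℝ × ℝ =>
        p.1 ^ (lam - 1) *
          (p.2.1 ^ (α - 1) * Real.exp (-(p.1 ^ μ * p.2.1 ^ μ)) * f p.2.1) *
          (p.2.2 ^ (δ - 1) * Real.sin (p.1 ^ μ * p.2.2 ^ μ) * g p.2.2))
      (Ioi 0 ×ˢ Ioi 0 ×ˢ Ioi 0)) :
    ∫ y in Ioi (0:ℝ), y ^ (lam - 1) *
        (∫ t in Ioi (0:ℝ), t ^ (α - 1) * Real.exp (-(y ^ μ * t ^ μ)) * f t) *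
        (∫ x in Ioi (0:ℝ), x ^ (δ - 1) * Real.sin (y ^ μ * x ^ μ) * g x)
      = (1 / μ) * Real.Gamma (lam / μ) *
        ∫ t in Ioi (0:ℝ), t ^ (α - 1) * f t *
          ∫ x in Ioi (0:ℝ), x ^ (δ - 1) * (t ^ (2 * μ) + x ^ (2 * μ)) ^ (-(lam / (2 * μ))) *
            Real.sin ((lam / μ) * Real.arctan (x ^ μ / t ^ μ)) * g x :=
  parseval_goldstein_fourier_sine_general α δ lam μ f g hμ hlam hint
end
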